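/- arXiv:1201.3777 — 4 statements merged into one kernel-verified Lean document; each statement's English description precedes it below -/
import Mathlib

section
/- Fix 0 < s < 1 and N ≥ 1, and let m : ℝ³ → (0,1] be defined by m(ξ) = 1 for |ξ| ≤ N and m(ξ) = (N/|ξ|)^{1−s} for |ξ| ≥ 2N, smooth, radial, nonincreasing in |ξ|. If ξ₁, ξ₂, ξ₃ ∈ ℝ³ satisfy |ξ₁| ≥ |ξ₂| ≥ |ξ₃| ≥ N, then M(ξ₁,ξ₂,ξ₃) := [m(ξ₁+ξ₂+ξ₃)/(m(ξ₁)m(ξ₂)m(ξ₃))] · |ξ₁+ξ₂+ξ₃|/(|ξ₁||ξ₂||ξ₃|) ≲ 1/(|ξ₂|^s |ξ₃|^s N^{2(1−s)}), with implicit constant independent of N and the ξᵢ. -/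
/-- Multiplier bound for the I-method trilinear multiplier when all three
frequencies are `≥ N`: for `ξ₁, ξ₂, ξ₃` with `|ξ₁| ≥ |ξ₂| ≥ |ξ₃| ≥ N`,
`M(ξ₁,ξ₂,ξ₃) = (m(ξ₁+ξ₂+ξ₃)/(m(ξ₁)m(ξ₂)m(ξ₃))) · |ξ₁+ξ₂+ξ₃|/(|ξ₁||ξ₂||ξ₃|)
  ≲ 1/(|ξ₂|^s |ξ₃|^s N^{2(1−s)})`,
with the implicit constant depending only on `s` (not on `N`, `m`, or the `ξᵢ`).
Here `m` is the I-multiplier: radial nonincreasing, `0 < m ≤ 1`, `m = 1` on `{|ξ| ≤ N}`,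
`m(ξ) = (N/|ξ|)^{1−s}` on `{|ξ| ≥ 2N}`, and (consequence of the construction, taken as a
hypothesis) `m(ξ) ≥ (1/2)·(N/|ξ|)^{1−s}` for `|ξ| ≥ N`. -/
theorem I_multiplier_bound_three_high (s : ℝ) (hs : 1/2 < s) (hs1 : s < 1) :
    ∃ C > (0:ℝ), ∀ (N : ℝ), 1 ≤ N →
      ∀ m : EuclideanSpace ℝ (Fin 3) → ℝ,
        (∀ ξ, 0 < m ξ) → (∀ ξ, m ξ ≤ 1) →
        (∀ ξ, ‖ξ‖ ≤ N → m ξ = 1) →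
        (∀ ξ, 2 * N ≤ ‖ξ‖ → m ξ = (N / ‖ξ‖) ^ (1 - s)) →
        (∀ ξ, N ≤ ‖ξ‖ → (1/2) * (N / ‖ξ‖) ^ (1 - s) ≤ m ξ) →
        (∀ ξ η : EuclideanSpace ℝ (Fin 3), ‖η‖ ≤ ‖ξ‖ → m ξ ≤ m η) →
      ∀ ξ₁ ξ₂ ξ₃ : EuclideanSpace ℝ (Fin 3),
        ‖ξ₂‖ ≤ ‖ξ₁‖ → ‖ξ₃‖ ≤ ‖ξ₂‖ → N ≤ ‖ξ₃‖ →
        m (ξ₁ + ξ₂ + ξ₃) / (m ξ₁ * m ξ₂ * m ξ₃) *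
            (‖ξ₁ + ξ₂ + ξ₃‖ / (‖ξ₁‖ * ‖ξ₂‖ * ‖ξ₃‖)) ≤
          C / (‖ξ₂‖ ^ s * ‖ξ₃‖ ^ s * N ^ (2 * (1 - s))) := by
  refine ⟨24, by norm_num, ?_⟩
  intro N hN m hm0 hm1 _ hmhigh hmmid _ ξ₁ ξ₂ ξ₃ h21 h32 h3N
  have hN0 : (0:ℝ) < N := lt_of_lt_of_le one_pos hN
  have hs0 : (0:ℝ) < s := lt_trans (by norm_num) hs
  have h2N : N ≤ ‖ξ₂‖ := le_trans h3N h32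
  have h1N : N ≤ ‖ξ₁‖ := le_trans h2N h21
  have ha : (0:ℝ) < ‖ξ₁‖ := lt_of_lt_of_le hN0 h1N
  have hb : (0:ℝ) < ‖ξ₂‖ := lt_of_lt_of_le hN0 h2N
  have hc : (0:ℝ) < ‖ξ₃‖ := lt_of_lt_of_le hN0 h3N
  set a := ‖ξ₁‖ with ha'
  set b := ‖ξ₂‖ with hb'
  set c := ‖ξ₃‖ with hc'
  -- key algebraic identity
  have key : ∀ x : ℝ, 0 < x → (N / x) ^ (1 - s) * x = N ^ (1 - s) * x ^ s := by
    intro x hx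
    rw [Real.div_rpow hN0.le hx.le, div_mul_eq_mul_div, mul_div_assoc]
    congr 1
    rw [div_eq_iff (by positivity), ← Real.rpow_add hx]
    norm_num
  set u := N ^ (1 - s) with hu'
  have hu : (0:ℝ) < u := Real.rpow_pos_of_pos hN0 _
  have hA : (0:ℝ) < a ^ s := Real.rpow_pos_of_pos ha _
  have hB : (0:ℝ) < b ^ s := Real.rpow_pos_of_pos hb _
  have hC : (0:ℝ) < c ^ s := Real.rpow_pos_of_pos hc _
  have hσa : ‖ξ₁ + ξ₂ + ξ₃‖ ≤ 3 * a := by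
    calc ‖ξ₁ + ξ₂ + ξ₃‖ ≤ ‖ξ₁‖ + ‖ξ₂‖ + ‖ξ₃‖ := norm_add₃_le
      _ ≤ 3 * a := by rw [← ha', ← hb', ← hc']; linarith
  -- bound on m(σ)‖σ‖
  have hkey : m (ξ₁ + ξ₂ + ξ₃) * ‖ξ₁ + ξ₂ + ξ₃‖ ≤ 3 * (u * a ^ s) := by
    rcases le_or_gt ‖ξ₁ + ξ₂ + ξ₃‖ (2 * N) with h | h
    · have h1 : m (ξ₁ + ξ₂ + ξ₃) * ‖ξ₁ + ξ₂ + ξ₃‖ ≤ 2 * N := by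
        calc m (ξ₁ + ξ₂ + ξ₃) * ‖ξ₁ + ξ₂ + ξ₃‖ ≤ 1 * (2 * N) :=
          mul_le_mul (hm1 _) h (norm_nonneg _) zero_le_one
          _ = 2 * N := one_mul _
      have h2 : N = u * N ^ s := by
        rw [hu', ← Real.rpow_add hN0]; norm_num
      have h3 : N ^ s ≤ a ^ s := Real.rpow_le_rpow hN0.le h1N hs0.le
      nlinarith [mul_le_mul_of_nonneg_left h3 hu.le]
    · rw [hmhigh _ h.le, key _ (lt_trans (by positivity) h)]
      have h3 : ‖ξ₁ + ξ₂ + ξ₃‖ ^ s ≤ 3 * a ^ s := by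
        calc ‖ξ₁ + ξ₂ + ξ₃‖ ^ s ≤ (3 * a) ^ s :=
          Real.rpow_le_rpow (norm_nonneg _) hσa hs0.le
          _ = 3 ^ s * a ^ s := Real.mul_rpow (by norm_num) ha.le
          _ ≤ 3 * a ^ s := by
            have : (3:ℝ) ^ s ≤ 3 ^ (1:ℝ) :=
              Real.rpow_le_rpow_of_exponent_le (by norm_num) hs1.le
            rw [Real.rpow_one] at this
            exact mul_le_mul_of_nonneg_right this hA.le
      nlinarith [mul_le_mul_of_nonneg_left h3 hu.le]
  -- lower bounds m ξᵢ * ‖ξᵢ‖ ≥ (1/2) u ‖ξᵢ‖^s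
  have hma : (1/2) * (u * a ^ s) ≤ m ξ₁ * a := by
    have := mul_le_mul_of_nonneg_right (hmmid ξ₁ h1N) ha.le
    rw [mul_assoc, key a ha] at this; linarith
  have hmb : (1/2) * (u * b ^ s) ≤ m ξ₂ * b := by
    have := mul_le_mul_of_nonneg_right (hmmid ξ₂ h2N) hb.le
    rw [mul_assoc, key b hb] at this; linarith
  have hmc : (1/2) * (u * c ^ s) ≤ m ξ₃ * c := by
    have := mul_le_mul_of_nonneg_right (hmmid ξ₃ h3N) hc.le
    rw [mul_assoc, key c hc] at this; linarith
  have hNu : N ^ (2 * (1 - s)) = u * u := by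
    rw [hu', ← Real.rpow_add hN0]; ring_nf
  have hm1p := hm0 ξ₁; have hm2p := hm0 ξ₂; have hm3p := hm0 ξ₃
  rw [hNu, div_mul_div_comm, div_le_div_iff₀ (by positivity) (by positivity)]
  have hprod : (1/2 * (u * a ^ s)) * ((1/2) * (u * b ^ s)) * ((1/2) * (u * c ^ s))
      ≤ (m ξ₁ * a) * (m ξ₂ * b) * (m ξ₃ * c) := by
    apply mul_le_mul (mul_le_mul hma hmb (by positivity) (by positivity)) hmc
      (by positivity) (by positivity)
  have hσnn : (0:ℝ) ≤ ‖ξ₁ + ξ₂ + ξ₃‖ := norm_nonneg _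
  have hchain : m (ξ₁ + ξ₂ + ξ₃) * ‖ξ₁ + ξ₂ + ξ₃‖ * (b ^ s * c ^ s * (u * u))
      ≤ 3 * (u * a ^ s) * (b ^ s * c ^ s * (u * u)) :=
    mul_le_mul_of_nonneg_right hkey (by positivity)
  calc m (ξ₁ + ξ₂ + ξ₃) * ‖ξ₁ + ξ₂ + ξ₃‖ * (b ^ s * c ^ s * (u * u))
      ≤ 3 * (u * a ^ s) * (b ^ s * c ^ s * (u * u)) := hchain
    _ = 24 * ((1/2 * (u * a ^ s)) * ((1/2) * (u * b ^ s)) * ((1/2) * (u * c ^ s))) := by ring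
    _ ≤ 24 * ((m ξ₁ * a) * (m ξ₂ * b) * (m ξ₃ * c)) := by linarith
    _ = 24 * (m ξ₁ * m ξ₂ * m ξ₃ * (a * b * c)) := by ring
end

section
/- Fix 0 < s < 1 and N ≥ 1, and let m be the I-method multiplier (m(ξ)=1 for |ξ| ≤ N, m(ξ)=(N/|ξ|)^{1−s} for |ξ| ≥ 2N, smooth radial nonincreasing). If ξ₁, ξ₂, ξ₃ ∈ ℝ³ satisfy |ξ₁| ≥ |ξ₂| ≥ N ≥ |ξ₃| > 0, then M(ξ₁,ξ₂,ξ₃) := [m(ξ₁+ξ₂+ξ₃)/(m(ξ₁)m(ξ₂)m(ξ₃))] · |ξ₁+ξ₂+ξ₃|/(|ξ₁||ξ₂||ξ₃|) ≲ 1/(|ξ₂|^s |ξ₃| N^{1−s}), with implicit constant independent of N and the ξᵢ. -/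
private lemma rpow_div_mul_aux {N x : ℝ} (t : ℝ) (hN : 0 < N) (hx : 0 < x) :
    (N / x) ^ t * x = N ^ t * x ^ (1 - t) := by
  rw [Real.div_rpow hN.le hx.le, Real.rpow_sub hx, Real.rpow_one]
  field_simp

/-- Multiplier bound for the I-method trilinear multiplier when
`|ξ₁| ≥ |ξ₂| ≥ N ≥ |ξ₃| > 0`:
`M(ξ₁,ξ₂,ξ₃) ≲ 1/(|ξ₂|^s |ξ₃| N^{1−s})`, with implicit constant depending only on `s`.
`m` is the I-multiplier (radial nonincreasing, `0 < m ≤ 1`, `m = 1` on `{|ξ| ≤ N}`,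
`m(ξ) = (N/|ξ|)^{1−s}` on `{|ξ| ≥ 2N}`, and `m(ξ) ≥ (1/2)(N/|ξ|)^{1−s}` for `|ξ| ≥ N`). -/
theorem I_multiplier_bound_two_high (s : ℝ) (hs : 1/2 < s) (hs1 : s < 1) :
    ∃ C > (0:ℝ), ∀ (N : ℝ), 1 ≤ N →
      ∀ m : EuclideanSpace ℝ (Fin 3) → ℝ,
        (∀ ξ, 0 < m ξ) → (∀ ξ, m ξ ≤ 1) →
        (∀ ξ, ‖ξ‖ ≤ N → m ξ = 1) →
        (∀ ξ, 2 * N ≤ ‖ξ‖ → m ξ = (N / ‖ξ‖) ^ (1 - s)) →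
        (∀ ξ, N ≤ ‖ξ‖ → (1/2) * (N / ‖ξ‖) ^ (1 - s) ≤ m ξ) →
        (∀ ξ η : EuclideanSpace ℝ (Fin 3), ‖η‖ ≤ ‖ξ‖ → m ξ ≤ m η) →
      ∀ ξ₁ ξ₂ ξ₃ : EuclideanSpace ℝ (Fin 3),
        ‖ξ₂‖ ≤ ‖ξ₁‖ → N ≤ ‖ξ₂‖ → ‖ξ₃‖ ≤ N → 0 < ‖ξ₃‖ →
        m (ξ₁ + ξ₂ + ξ₃) / (m ξ₁ * m ξ₂ * m ξ₃) *
            (‖ξ₁ + ξ₂ + ξ₃‖ / (‖ξ₁‖ * ‖ξ₂‖ * ‖ξ₃‖)) ≤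
          C / (‖ξ₂‖ ^ s * ‖ξ₃‖ * N ^ (1 - s)) := by
  refine ⟨8, by norm_num, ?_⟩
  intro N hN m hpos hle hm1 hm2 hlow hmono ξ₁ ξ₂ ξ₃ h21 hN2 h3N h3pos
  set σ := ξ₁ + ξ₂ + ξ₃ with hσdef
  have hN0 : (0:ℝ) < N := lt_of_lt_of_le one_pos hN
  have hb : 0 < ‖ξ₂‖ := lt_of_lt_of_le hN0 hN2
  have ha : 0 < ‖ξ₁‖ := lt_of_lt_of_le hb h21
  have hN1 : N ≤ ‖ξ₁‖ := le_trans hN2 h21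
  have hs0 : (0:ℝ) < s := by linarith
  have hNs : 0 < N ^ (1-s) := Real.rpow_pos_of_pos hN0 _
  have hbs : 0 < ‖ξ₂‖ ^ s := Real.rpow_pos_of_pos hb _
  have has : 0 < ‖ξ₁‖ ^ s := Real.rpow_pos_of_pos ha _
  have h1s : (1:ℝ) - (1 - s) = s := by ring
  have hm3 : m ξ₃ = 1 := hm1 ξ₃ h3N
  -- key2 : b^s * N^{1-s} ≤ 2 * (m ξ₂ * b)
  have key2 : ‖ξ₂‖ ^ s * N ^ (1-s) ≤ 2 * (m ξ₂ * ‖ξ₂‖) := by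
    have h := mul_le_mul_of_nonneg_right (hlow ξ₂ hN2) hb.le
    have heq := rpow_div_mul_aux (1-s) hN0 hb
    rw [h1s] at heq
    rw [mul_assoc, heq] at h
    linarith
  -- lower bound on m ξ₁ * ‖ξ₁‖
  have hlb : N ^ (1-s) * ‖ξ₁‖ ^ s ≤ 2 * (m ξ₁ * ‖ξ₁‖) := by
    have h := mul_le_mul_of_nonneg_right (hlow ξ₁ hN1) ha.le
    have heq := rpow_div_mul_aux (1-s) hN0 ha
    rw [h1s] at heq
    rw [mul_assoc, heq] at h
    linarith
  -- key1 : m σ * ‖σ‖ ≤ 4 * (m ξ₁ * ‖ξ₁‖)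
  have key1 : m σ * ‖σ‖ ≤ 4 * (m ξ₁ * ‖ξ₁‖) := by
    have hσ3 : ‖σ‖ ≤ 3 * ‖ξ₁‖ := by
      have h1 : ‖σ‖ ≤ ‖ξ₁ + ξ₂‖ + ‖ξ₃‖ := norm_add_le _ _
      have h2 : ‖ξ₁ + ξ₂‖ ≤ ‖ξ₁‖ + ‖ξ₂‖ := norm_add_le _ _
      linarith [h3N.trans hN1]
    rcases le_or_gt ‖ξ₁‖ ‖σ‖ with h | h
    · have hm := hmono σ ξ₁ h
      nlinarith [(hpos σ).le, norm_nonneg σ, (hpos ξ₁).le]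
    · have haux : m σ * ‖σ‖ ≤ 2 * (N ^ (1-s) * ‖ξ₁‖ ^ s) := by
        have hNeq : N = N ^ (1-s) * N ^ s := by
          rw [← Real.rpow_add hN0]; norm_num
        have hNs' : N ^ s ≤ ‖ξ₁‖ ^ s := Real.rpow_le_rpow hN0.le hN1 hs0.le
        have hPR : N ^ (1-s) * N ^ s ≤ N ^ (1-s) * ‖ξ₁‖ ^ s :=
          mul_le_mul_of_nonneg_left hNs' hNs.le
        rcases le_or_gt ‖σ‖ (2*N) with h2 | h2
        · have hstep : m σ * ‖σ‖ ≤ 1 * (2*N) :=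
            mul_le_mul (hle σ) h2 (norm_nonneg σ) zero_le_one
          calc m σ * ‖σ‖ ≤ 1 * (2*N) := hstep
            _ = 2 * (N ^ (1-s) * N ^ s) := by rw [← hNeq]; ring
            _ ≤ 2 * (N ^ (1-s) * ‖ξ₁‖ ^ s) := by linarith
        · have hσ0 : 0 < ‖σ‖ := by nlinarith
          have hmσ : m σ = (N/‖σ‖) ^ (1-s) := hm2 σ h2.le
          have heq := rpow_div_mul_aux (1-s) hN0 hσ0
          rw [h1s] at heq
          have hσs : ‖σ‖ ^ s ≤ ‖ξ₁‖ ^ s := Real.rpow_le_rpow hσ0.le h.le hs0.le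
          have hPS : N ^ (1-s) * ‖σ‖ ^ s ≤ N ^ (1-s) * ‖ξ₁‖ ^ s :=
            mul_le_mul_of_nonneg_left hσs hNs.le
          rw [hmσ, heq]
          nlinarith [mul_pos hNs has]
      linarith
  -- combine
  rw [hm3, mul_one, div_mul_div_comm,
    div_le_div_iff₀ (mul_pos (mul_pos (hpos ξ₁) (hpos ξ₂)) (mul_pos (mul_pos ha hb) h3pos))
      (mul_pos (mul_pos hbs h3pos) hNs)]
  have hmul := mul_le_mul key1 key2 (mul_pos hbs hNs).le
    (by nlinarith [(hpos ξ₁)] : (0:ℝ) ≤ 4 * (m ξ₁ * ‖ξ₁‖))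
  have h2 := mul_le_mul_of_nonneg_right hmul h3pos.le
  calc m σ * ‖σ‖ * (‖ξ₂‖ ^ s * ‖ξ₃‖ * N ^ (1-s))
      = m σ * ‖σ‖ * (‖ξ₂‖ ^ s * N ^ (1-s)) * ‖ξ₃‖ := by ring
    _ ≤ 4 * (m ξ₁ * ‖ξ₁‖) * (2 * (m ξ₂ * ‖ξ₂‖)) * ‖ξ₃‖ := h2
    _ = 8 * (m ξ₁ * m ξ₂ * (‖ξ₁‖ * ‖ξ₂‖ * ‖ξ₃‖)) := by ring
end

section
/- Fix 1/2 ≤ s < 1 and N ≥ 1, and let m be the I-method multiplier. If ξ₁, ξ₂ ∈ ℝ³ satisfy |ξ₁| ≥ |ξ₂| ≥ N, then M(ξ₁,ξ₂) := [m(ξ₁+ξ₂)/(m(ξ₁)m(ξ₂))] · |ξ₁+ξ₂|/(|ξ₁||ξ₂|) ≲ 1/(|ξ₂|^s N^{1−s}), with implicit constant independent of N, ξ₁, ξ₂. -/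
/-- Bilinear I-method multiplier bound for two high frequencies:
for `|ξ₁| ≥ |ξ₂| ≥ N`,
`M(ξ₁,ξ₂) = (m(ξ₁+ξ₂)/(m(ξ₁)m(ξ₂))) · |ξ₁+ξ₂|/(|ξ₁||ξ₂|) ≲ 1/(|ξ₂|^s N^{1−s})`,
with implicit constant depending only on `s ∈ [1/2,1)`. `m` is the I-multiplier
(radial nonincreasing, `0 < m ≤ 1`, `m = 1` on `{|ξ| ≤ N}`, `m(ξ) = (N/|ξ|)^{1−s}` on
`{|ξ| ≥ 2N}`, and `m(ξ) ≥ (1/2)(N/|ξ|)^{1−s}` for `|ξ| ≥ N`). -/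
theorem I_multiplier_bound_bilinear_high (s : ℝ) (hs : 1/2 ≤ s) (hs1 : s < 1) :
    ∃ C > (0:ℝ), ∀ (N : ℝ), 1 ≤ N →
      ∀ m : EuclideanSpace ℝ (Fin 3) → ℝ,
        (∀ ξ, 0 < m ξ) → (∀ ξ, m ξ ≤ 1) →
        (∀ ξ, ‖ξ‖ ≤ N → m ξ = 1) →
        (∀ ξ, 2 * N ≤ ‖ξ‖ → m ξ = (N / ‖ξ‖) ^ (1 - s)) →
        (∀ ξ, N ≤ ‖ξ‖ → (1/2) * (N / ‖ξ‖) ^ (1 - s) ≤ m ξ) →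
        (∀ ξ η : EuclideanSpace ℝ (Fin 3), ‖η‖ ≤ ‖ξ‖ → m ξ ≤ m η) →
      ∀ ξ₁ ξ₂ : EuclideanSpace ℝ (Fin 3),
        ‖ξ₂‖ ≤ ‖ξ₁‖ → N ≤ ‖ξ₂‖ →
        m (ξ₁ + ξ₂) / (m ξ₁ * m ξ₂) * (‖ξ₁ + ξ₂‖ / (‖ξ₁‖ * ‖ξ₂‖)) ≤
          C / (‖ξ₂‖ ^ s * N ^ (1 - s)) := by
  refine ⟨8, by norm_num, ?_⟩
  intro N hN m hpos hle1 hone htail hlow hmono ξ₁ ξ₂ hba hNb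
  have hN0 : (0:ℝ) < N := lt_of_lt_of_le one_pos hN
  have hb0 : (0:ℝ) < ‖ξ₂‖ := lt_of_lt_of_le hN0 hNb
  have hNa : N ≤ ‖ξ₁‖ := hNb.trans hba
  have ha0 : (0:ℝ) < ‖ξ₁‖ := lt_of_lt_of_le hN0 hNa
  have hu2a : ‖ξ₁ + ξ₂‖ ≤ 2 * ‖ξ₁‖ := (norm_add_le _ _).trans (by linarith)
  have hNs0 : (0:ℝ) < N ^ (1 - s) := Real.rpow_pos_of_pos hN0 _
  -- conversion: (N/r)^(1-s) * r = N^(1-s) * r^s for r > 0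
  have hconv : ∀ r : ℝ, 0 < r → (N / r) ^ (1 - s) * r = N ^ (1 - s) * r ^ s := by
    intro r hr
    rw [Real.div_rpow hN0.le hr.le, div_mul_eq_mul_div, mul_div_assoc]
    congr 1
    have h := Real.rpow_sub hr 1 (1 - s)
    rw [Real.rpow_one] at h
    rw [← h]
    norm_num
  -- key: for N ≤ ‖x‖, N^(1-s) * ‖x‖^s ≤ 2 * (m x * ‖x‖)
  have key : ∀ x : EuclideanSpace ℝ (Fin 3), N ≤ ‖x‖ →
      N ^ (1 - s) * ‖x‖ ^ s ≤ 2 * (m x * ‖x‖) := by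
    intro x hx
    have hx0 : (0:ℝ) < ‖x‖ := lt_of_lt_of_le hN0 hx
    have h := hlow x hx
    have hc := hconv ‖x‖ hx0
    nlinarith [hx0.le]
  have key1 := key ξ₁ hNa
  have key2 := key ξ₂ hNb
  -- N ≤ N^(1-s) * ‖ξ₁‖^s
  have hNas : N ≤ N ^ (1 - s) * ‖ξ₁‖ ^ s := by
    have h1 : N ^ s ≤ ‖ξ₁‖ ^ s :=
      Real.rpow_le_rpow hN0.le hNa (by linarith)
    have h2 : N ^ (1 - s) * N ^ s = N := by
      rw [← Real.rpow_add hN0]; norm_num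
    nlinarith
  -- main: m(ξ₁+ξ₂) * ‖ξ₁+ξ₂‖ ≤ 4 * (m ξ₁ * ‖ξ₁‖)
  have h1 : m (ξ₁ + ξ₂) * ‖ξ₁ + ξ₂‖ ≤ 4 * (m ξ₁ * ‖ξ₁‖) := by
    rcases le_or_gt ‖ξ₁ + ξ₂‖ (2 * N) with hu | hu
    · have hm1 := hle1 (ξ₁ + ξ₂)
      have hmp := (hpos (ξ₁ + ξ₂)).le
      have hu0 : (0:ℝ) ≤ ‖ξ₁ + ξ₂‖ := norm_nonneg _
      nlinarith
    · have heq := htail (ξ₁ + ξ₂) hu.le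
      have hu0 : (0:ℝ) < ‖ξ₁ + ξ₂‖ := by linarith
      have hc := hconv ‖ξ₁ + ξ₂‖ hu0
      have hus : ‖ξ₁ + ξ₂‖ ^ s ≤ 2 * ‖ξ₁‖ ^ s := by
        have h2s : (2:ℝ) ^ s ≤ 2 := by
          calc (2:ℝ) ^ s ≤ (2:ℝ) ^ (1:ℝ) :=
                Real.rpow_le_rpow_of_exponent_le one_le_two hs1.le
            _ = 2 := Real.rpow_one 2
        calc ‖ξ₁ + ξ₂‖ ^ s ≤ (2 * ‖ξ₁‖) ^ s :=
              Real.rpow_le_rpow (norm_nonneg _) hu2a (by linarith)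
          _ = 2 ^ s * ‖ξ₁‖ ^ s := Real.mul_rpow (by norm_num) (norm_nonneg _)
          _ ≤ 2 * ‖ξ₁‖ ^ s := by
              have : (0:ℝ) ≤ ‖ξ₁‖ ^ s := Real.rpow_nonneg (norm_nonneg _) _
              nlinarith
      rw [heq, hc]
      nlinarith [hNs0.le]
  -- assemble
  have hmul : m (ξ₁ + ξ₂) / (m ξ₁ * m ξ₂) * (‖ξ₁ + ξ₂‖ / (‖ξ₁‖ * ‖ξ₂‖))
      = (m (ξ₁ + ξ₂) * ‖ξ₁ + ξ₂‖) / ((m ξ₁ * m ξ₂) * (‖ξ₁‖ * ‖ξ₂‖)) :=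
    div_mul_div_comm _ _ _ _
  have hbs : (0:ℝ) < ‖ξ₂‖ ^ s := Real.rpow_pos_of_pos hb0 _
  rw [hmul, div_le_div_iff₀
    (mul_pos (mul_pos (hpos ξ₁) (hpos ξ₂)) (mul_pos ha0 hb0)) (mul_pos hbs hNs0)]
  have hprod : (m (ξ₁ + ξ₂) * ‖ξ₁ + ξ₂‖) * (N ^ (1 - s) * ‖ξ₂‖ ^ s)
      ≤ (4 * (m ξ₁ * ‖ξ₁‖)) * (2 * (m ξ₂ * ‖ξ₂‖)) := by
    apply mul_le_mul h1 key2 (by positivity)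
    nlinarith [(hpos ξ₁), ha0]
  nlinarith [hprod]
end

section
/- Fix 0 < s < 1 and N ≥ 1, and let m be the I-method multiplier. If ξ₁, ξ₂ ∈ ℝ³ with |ξ₁| ≥ |ξ₂| > 0 and |ξ₂| ≤ N, then M(ξ₁,ξ₂) := [m(ξ₁+ξ₂)/(m(ξ₁)m(ξ₂))] · |ξ₁+ξ₂|/(|ξ₁||ξ₂|) ≲ 1/|ξ₂|, with implicit constant independent of N, ξ₁, ξ₂. -/
/-!
Since `|ξ₂| ≤ N`, `m(ξ₂) = 1` and `|ξ₁| ≤ |ξ₁ + ξ₂| + N`. The multiplier barely changes under such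
a shift: `m(ξ₁ + ξ₂) ≤ 4^(1-s) m(ξ₁)`. Indeed, if `|ξ₁| ≤ 4N` then `m(ξ₁) ≥ 4^(s-1)` by
monotonicity, while if `|ξ₁| > 4N` both frequencies lie in the region `|ξ| ≥ 2N` where `m` is an
explicit power and their norms are comparable. Together with `|ξ₁ + ξ₂| ≤ 2|ξ₁|` this bounds
`M(ξ₁, ξ₂)` by `2 · 4^(1-s) / |ξ₂|`.
-/

open Real

section

variable {E : Type*} [NormedAddCommGroup E] [NormedSpace ℝ E] [Nontrivial E]
  {s N : ℝ} {m : E → ℝ}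

theorem inv_four_rpow_le_multiplier (hN : 0 < N)
    (hfar : ∀ ξ, 2 * N ≤ ‖ξ‖ → m ξ = (N / ‖ξ‖) ^ (1 - s))
    (hmono : ∀ ξ η : E, ‖η‖ ≤ ‖ξ‖ → m ξ ≤ m η) {ξ : E} (hξ : ‖ξ‖ ≤ 4 * N) :
    (4 : ℝ)⁻¹ ^ (1 - s) ≤ m ξ := by
  obtain ⟨η, hη⟩ := exists_norm_eq E (by positivity : 0 ≤ 4 * N)
  have hmη : m η = (4 : ℝ)⁻¹ ^ (1 - s) := by
    rw [hfar η (by linarith), hη]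
    congr 1
    field_simp
  exact hmη ▸ hmono η ξ (hη ▸ hξ)

theorem multiplier_le_four_rpow_mul (hN : 0 < N) (hs : s ≤ 1) (hle1 : ∀ ξ, m ξ ≤ 1)
    (hfar : ∀ ξ, 2 * N ≤ ‖ξ‖ → m ξ = (N / ‖ξ‖) ^ (1 - s))
    (hmono : ∀ ξ η : E, ‖η‖ ≤ ‖ξ‖ → m ξ ≤ m η) {ξ η : E} (h : ‖ξ‖ ≤ ‖η‖ + N) :
    m η ≤ 4 ^ (1 - s) * m ξ := by
  rcases le_or_gt ‖ξ‖ (4 * N) with hξ | hξ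
  · calc m η ≤ 4 ^ (1 - s) * (4 : ℝ)⁻¹ ^ (1 - s) := by
          rw [← mul_rpow (by norm_num) (by norm_num), mul_inv_cancel₀ four_ne_zero, one_rpow]
          exact hle1 η
      _ ≤ 4 ^ (1 - s) * m ξ := by
          gcongr
          exact inv_four_rpow_le_multiplier hN hfar hmono hξ
  · have hη : 2 * N ≤ ‖η‖ := by linarith
    have hηpos : 0 < ‖η‖ := by linarith
    calc m η = (N / ‖η‖) ^ (1 - s) := hfar η hη
      _ ≤ (4 * (N / ‖ξ‖)) ^ (1 - s) := by
          refine rpow_le_rpow (by positivity) ?_ (by linarith)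
          rw [mul_div_assoc', div_le_div_iff₀ hηpos (by linarith)]
          nlinarith
      _ = 4 ^ (1 - s) * m ξ := by
          rw [mul_rpow (by norm_num) (by positivity), hfar ξ (by linarith)]

end

theorem I_multiplier_bound_bilinear_low_general (s : ℝ) (hs1 : s < 1)
    (cm : ℝ) :
    ∃ C > (0:ℝ), ∀ (N : ℝ), 1 ≤ N →
      ∀ m : EuclideanSpace ℝ (Fin 3) → ℝ,
        (∀ ξ, 0 < m ξ) → (∀ ξ, m ξ ≤ 1) →
        (∀ ξ, ‖ξ‖ ≤ N → m ξ = 1) →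
        (∀ ξ, 2 * N ≤ ‖ξ‖ → m ξ = (N / ‖ξ‖) ^ (1 - s)) →
        (∀ ξ η : EuclideanSpace ℝ (Fin 3), ‖η‖ ≤ ‖ξ‖ → m ξ ≤ m η) →
        (∀ ξ : EuclideanSpace ℝ (Fin 3), ξ ≠ 0 →
          ‖fderiv ℝ m ξ‖ ≤ cm * m ξ / ‖ξ‖) →
      ∀ ξ₁ ξ₂ : EuclideanSpace ℝ (Fin 3),
        ‖ξ₂‖ ≤ ‖ξ₁‖ → 0 < ‖ξ₂‖ → ‖ξ₂‖ ≤ N →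
        m (ξ₁ + ξ₂) / (m ξ₁ * m ξ₂) * (‖ξ₁ + ξ₂‖ / (‖ξ₁‖ * ‖ξ₂‖)) ≤
          C / ‖ξ₂‖ := by
  refine ⟨4 ^ (1 - s) * 2, by positivity, ?_⟩
  intro N hN m hpos hle1 hlow hfar hmono _ ξ₁ ξ₂ h21 h2pos h2N
  have h1pos : 0 < ‖ξ₁‖ := h2pos.trans_le h21
  have hshift : ‖ξ₁‖ ≤ ‖ξ₁ + ξ₂‖ + N := by
    have := norm_le_add_norm_add ξ₁ ξ₂
    linarith
  have hratio : m (ξ₁ + ξ₂) / m ξ₁ ≤ 4 ^ (1 - s) := by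
    rw [div_le_iff₀ (hpos ξ₁)]
    exact multiplier_le_four_rpow_mul (by linarith) hs1.le hle1 hfar hmono hshift
  have hsum : ‖ξ₁ + ξ₂‖ / ‖ξ₁‖ ≤ 2 := by
    rw [div_le_iff₀ h1pos]
    linarith [norm_add_le ξ₁ ξ₂]
  calc m (ξ₁ + ξ₂) / (m ξ₁ * m ξ₂) * (‖ξ₁ + ξ₂‖ / (‖ξ₁‖ * ‖ξ₂‖))
      = m (ξ₁ + ξ₂) / m ξ₁ * (‖ξ₁ + ξ₂‖ / ‖ξ₁‖) / ‖ξ₂‖ := by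
        rw [hlow ξ₂ h2N, mul_one]
        ring
    _ ≤ 4 ^ (1 - s) * 2 / ‖ξ₂‖ := by
        gcongr

/-- Bilinear I-method multiplier bound for a low second frequency:
for `|ξ₁| ≥ |ξ₂| > 0` with `|ξ₂| ≤ N`,
`M(ξ₁,ξ₂) = (m(ξ₁+ξ₂)/(m(ξ₁)m(ξ₂))) · |ξ₁+ξ₂|/(|ξ₁||ξ₂|) ≲ 1/|ξ₂|`,
with implicit constant depending only on `s` and the constant `cm` in the gradient
bound `|∇m(ξ)| ≤ cm · m(ξ)/|ξ|` (the mean value theorem input). -/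
theorem I_multiplier_bound_bilinear_low (s : ℝ) (hs : 0 < s) (hs1 : s < 1)
    (cm : ℝ) (hcm : 0 < cm) :
    ∃ C > (0:ℝ), ∀ (N : ℝ), 1 ≤ N →
      ∀ m : EuclideanSpace ℝ (Fin 3) → ℝ,
        (∀ ξ, 0 < m ξ) → (∀ ξ, m ξ ≤ 1) →
        (∀ ξ, ‖ξ‖ ≤ N → m ξ = 1) →
        (∀ ξ, 2 * N ≤ ‖ξ‖ → m ξ = (N / ‖ξ‖) ^ (1 - s)) →
        (∀ ξ η : EuclideanSpace ℝ (Fin 3), ‖η‖ ≤ ‖ξ‖ → m ξ ≤ m η) →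
        (∀ ξ : EuclideanSpace ℝ (Fin 3), ξ ≠ 0 →
          ‖fderiv ℝ m ξ‖ ≤ cm * m ξ / ‖ξ‖) →
      ∀ ξ₁ ξ₂ : EuclideanSpace ℝ (Fin 3),
        ‖ξ₂‖ ≤ ‖ξ₁‖ → 0 < ‖ξ₂‖ → ‖ξ₂‖ ≤ N →
        m (ξ₁ + ξ₂) / (m ξ₁ * m ξ₂) * (‖ξ₁ + ξ₂‖ / (‖ξ₁‖ * ‖ξ₂‖)) ≤
          C / ‖ξ₂‖ :=
  I_multiplier_bound_bilinear_low_general s hs1 cm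
end
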